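/- Let (γ; b, σ, d, κ, 𝗄; π, ρ) be admissible parameters. The operator ℒ satisfies the positive maximum principle on 𝒟: if f ∈ 𝒟 and (x₀,ℓ₀) ∈ [0,∞)×ℤ₊ is such that f(x₀,ℓ₀) = sup_{(x,ℓ) ∈ [0,∞)×ℤ₊} f(x,ℓ) ≥ 0, then ℒf(x₀,ℓ₀) ≤ 0. -/
import Mathlib


open MeasureTheory Set Filter

/-- Admissibility of the parameters `(γ; b, σ, d, κ, 𝗄; π, ρ)`. -/
def Admissible (γ b σ d κ kk : ℝ) (π ρm : Measure (ℝ × ℕ)) : Prop :=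
  0 ≤ b ∧ 0 ≤ σ ∧ 0 ≤ d ∧ 0 ≤ κ ∧ 0 ≤ kk ∧
  IntegrableOn (fun p : ℝ × ℕ => min 1 (p.1 ^ 2)) (Ici (0 : ℝ) ×ˢ ({0} : Set ℕ)) π ∧
  π (Ici (0 : ℝ) ×ˢ {k : ℕ | 1 ≤ k}) < ⊤ ∧
  IntegrableOn (fun p : ℝ × ℕ => min 1 p.1) (Ici (0 : ℝ) ×ˢ ({0} : Set ℕ)) ρm ∧
  ρm (Ici (0 : ℝ) ×ˢ {k : ℕ | 1 ≤ k}) < ⊤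

/-- Membership in the domain 𝒟 (with supplied `x`-derivatives `f'`, `f''`). -/
def MemD (f f' f'' : ℝ → ℕ → ℝ) : Prop :=
  (∀ ℓ, ∀ x ∈ Ici (0 : ℝ), HasDerivWithinAt (fun z => f z ℓ) (f' x ℓ) (Ici 0) x) ∧
  (∀ ℓ, ∀ x ∈ Ici (0 : ℝ), HasDerivWithinAt (fun z => f' z ℓ) (f'' x ℓ) (Ici 0) x) ∧
  (∀ ℓ, ContinuousOn (fun x => f'' x ℓ) (Ici 0)) ∧
  (∀ ℓ, Tendsto (fun x => f x ℓ) atTop (nhds 0)) ∧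
  (∀ ℓ, Tendsto (fun x => f' x ℓ) atTop (nhds 0)) ∧
  (∀ ℓ, Tendsto (fun x => f'' x ℓ) atTop (nhds 0)) ∧
  (∀ ℓ, Tendsto (fun x => x * (|f x ℓ| + |f' x ℓ| + |f'' x ℓ|)) atTop (nhds 0)) ∧
  (∀ x, Tendsto (fun ℓ : ℕ => (ℓ : ℝ) * (|f x ℓ| + |f' x ℓ| + |f'' x ℓ|)) atTop (nhds 0))

/-- The operator `ℒ`, expressed with supplied first and second `x`-derivatives `f'`, `f''`. -/
noncomputable def Lop (γ b σ d κ kk : ℝ) (π ρm : Measure (ℝ × ℕ))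
    (f f' f'' : ℝ → ℕ → ℝ) (x : ℝ) (ℓ : ℕ) : ℝ :=
  γ * x * f' x ℓ + b * (ℓ : ℝ) * f' x ℓ + σ ^ 2 / 2 * x * f'' x ℓ
    - κ * x * f x ℓ - kk * (ℓ : ℝ) * f x ℓ
    + x * ∫ p in Ici (0 : ℝ) ×ˢ (univ : Set ℕ),
        (f (x + p.1) (ℓ + p.2) - f x ℓ -
          (if 0 < p.1 ∧ p.1 < 1 then p.1 * f' x ℓ else 0)) ∂π
    + (ℓ : ℝ) * ∫ p in Ici (0 : ℝ) ×ˢ (univ : Set ℕ),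
        (f (x + p.1) (ℓ + p.2) - f x ℓ) ∂ρm
    + d * (ℓ : ℝ) * (f x (ℓ - 1) - f x ℓ)

/-- Positive maximum principle: if `f ∈ 𝒟` attains a nonnegative maximum over
`[0,∞)×ℤ₊` at `(x₀,ℓ₀)`, then `ℒf(x₀,ℓ₀) ≤ 0`. -/
theorem positive_maximum_principle
    (γ b σ d κ kk : ℝ) (π ρm : Measure (ℝ × ℕ))
    (hadm : Admissible γ b σ d κ kk π ρm)
    (f f' f'' : ℝ → ℕ → ℝ) (hf : MemD f f' f'')
    (x₀ : ℝ) (hx₀ : x₀ ∈ Ici (0 : ℝ)) (ℓ₀ : ℕ)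
    (hmax : ∀ x ∈ Ici (0 : ℝ), ∀ ℓ : ℕ, f x ℓ ≤ f x₀ ℓ₀)
    (hpos : 0 ≤ f x₀ ℓ₀) :
    Lop γ b σ d κ kk π ρm f f' f'' x₀ ℓ₀ ≤ 0 := by
  obtain ⟨hb, hσ, hd, hκ, hkk, -, -, -, -⟩ := hadm
  obtain ⟨hD1, hD2, hD3, -⟩ := hf
  have hx0 : (0:ℝ) ≤ x₀ := hx₀
  -- f' x₀ ℓ₀ ≤ 0
  have hlmax : IsLocalMaxOn (fun z => f z ℓ₀) (Ici 0) x₀ :=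
    eventually_mem_nhdsWithin.mono (fun z hz => hmax z hz ℓ₀)
  have hone : (1:ℝ) ∈ posTangentConeAt (Ici (0:ℝ)) x₀ := by
    apply mem_posTangentConeAt_of_segment_subset
    rw [segment_eq_Icc (by linarith : x₀ ≤ x₀ + 1)]
    exact fun z hz => le_trans hx0 hz.1
  have hf'le : f' x₀ ℓ₀ ≤ 0 := by
    have := hlmax.hasFDerivWithinAt_nonpos
      (hD1 ℓ₀ x₀ hx₀).hasFDerivWithinAt hone
    simpa using this
  -- f' = 0 at interior max
  have hf'zero : 0 < x₀ → f' x₀ ℓ₀ = 0 := by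
    intro hxpos
    have hmem : Ici (0:ℝ) ∈ nhds x₀ := Ici_mem_nhds hxpos
    have hloc : IsLocalMax (fun z => f z ℓ₀) x₀ :=
      Filter.eventually_of_mem hmem (fun z hz => hmax z hz ℓ₀)
    exact hloc.hasDerivAt_eq_zero ((hD1 ℓ₀ x₀ hx₀).hasDerivAt hmem)
  -- f'' ≤ 0 at interior max
  have hf''le : 0 < x₀ → f'' x₀ ℓ₀ ≤ 0 := by
    intro hxpos
    by_contra hcon
    push_neg at hcon
    have hc : ContinuousAt (fun x => f'' x ℓ₀) x₀ :=
      ((hD3 ℓ₀) x₀ hx₀).continuousAt (Ici_mem_nhds hxpos)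
    have hev : ∀ᶠ y in nhds x₀, 0 < f'' y ℓ₀ := hc.eventually (eventually_gt_nhds hcon)
    obtain ⟨ε, hε, hball⟩ := Metric.eventually_nhds_iff.1 hev
    set δ := ε/2 with hδdef
    have hδ : 0 < δ := by positivity
    set D := Icc x₀ (x₀ + δ) with hDdef
    have hDsub : D ⊆ Ici (0:ℝ) := fun z hz => le_trans hx0 hz.1
    have hIsub : interior D ⊆ Ici (0:ℝ) := interior_subset.trans hDsub
    have hintD : interior D = Ioo x₀ (x₀ + δ) := interior_Icc
    have hposD : ∀ x ∈ interior D, 0 < f'' x ℓ₀ := by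
      intro x hx
      rw [hintD] at hx
      apply hball
      rw [Real.dist_eq, abs_of_nonneg (by linarith [hx.1] : (0:ℝ) ≤ x - x₀)]
      have := hx.2
      simp only [hδdef] at *
      linarith
    have hconv : Convex ℝ D := convex_Icc _ _
    have hcontf' : ContinuousOn (fun z => f' z ℓ₀) D := fun x hx =>
      ((hD2 ℓ₀ x (hDsub hx)).mono hDsub).continuousWithinAt
    have smf' : StrictMonoOn (fun z => f' z ℓ₀) D := by
      apply strictMonoOn_of_hasDerivWithinAt_pos hconv hcontf'
        (fun x hx => (hD2 ℓ₀ x (hIsub hx)).mono hIsub) hposD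
    have hx₀D : x₀ ∈ D := left_mem_Icc.2 (by linarith)
    have hxδD : x₀ + δ ∈ D := right_mem_Icc.2 (by linarith)
    have hf'pos : ∀ x ∈ interior D, 0 < f' x ℓ₀ := by
      intro x hx
      rw [hintD] at hx
      have h2 := smf' hx₀D (Ioo_subset_Icc_self hx) hx.1
      simp only at h2
      rwa [hf'zero hxpos] at h2
    have hcontf : ContinuousOn (fun z => f z ℓ₀) D := fun x hx =>
      ((hD1 ℓ₀ x (hDsub hx)).mono hDsub).continuousWithinAt
    have smf : StrictMonoOn (fun z => f z ℓ₀) D :=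
      strictMonoOn_of_hasDerivWithinAt_pos hconv hcontf
        (fun x hx => (hD1 ℓ₀ x (hIsub hx)).mono hIsub) hf'pos
    have : f x₀ ℓ₀ < f (x₀ + δ) ℓ₀ := smf hx₀D hxδD (by linarith)
    exact absurd (hmax (x₀ + δ) (by simp only [mem_Ici]; linarith) ℓ₀) (not_le.2 this)
  have hmeas : MeasurableSet (Ici (0:ℝ) ×ˢ (univ : Set ℕ)) :=
    measurableSet_Ici.prod MeasurableSet.univ
  -- term bounds
  have ht1 : γ * x₀ * f' x₀ ℓ₀ = 0 := by
    rcases eq_or_lt_of_le hx0 with h | h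
    · rw [← h]; ring
    · rw [hf'zero h]; ring
  have ht2 : b * (ℓ₀ : ℝ) * f' x₀ ℓ₀ ≤ 0 :=
    mul_nonpos_of_nonneg_of_nonpos (mul_nonneg hb (Nat.cast_nonneg _)) hf'le
  have ht3 : σ ^ 2 / 2 * x₀ * f'' x₀ ℓ₀ ≤ 0 := by
    rcases eq_or_lt_of_le hx0 with h | h
    · rw [← h]; simp
    · exact mul_nonpos_of_nonneg_of_nonpos
        (mul_nonneg (by positivity) hx0) (hf''le h)
  have ht4 : 0 ≤ κ * x₀ * f x₀ ℓ₀ := mul_nonneg (mul_nonneg hκ hx0) hpos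
  have ht4' : 0 ≤ kk * (ℓ₀ : ℝ) * f x₀ ℓ₀ :=
    mul_nonneg (mul_nonneg hkk (Nat.cast_nonneg _)) hpos
  have ht5 : x₀ * ∫ p in Ici (0 : ℝ) ×ˢ (univ : Set ℕ),
      (f (x₀ + p.1) (ℓ₀ + p.2) - f x₀ ℓ₀ -
        (if 0 < p.1 ∧ p.1 < 1 then p.1 * f' x₀ ℓ₀ else 0)) ∂π ≤ 0 := by
    rcases eq_or_lt_of_le hx0 with h | h
    · rw [← h]; simp
    · apply mul_nonpos_of_nonneg_of_nonpos hx0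
      apply setIntegral_nonpos hmeas
      intro p hp
      have hp1 : (0:ℝ) ≤ p.1 := hp.1
      have : f (x₀ + p.1) (ℓ₀ + p.2) ≤ f x₀ ℓ₀ :=
        hmax (x₀ + p.1) (by simp only [mem_Ici]; linarith) (ℓ₀ + p.2)
      rw [hf'zero h]
      simp only [mul_zero, ite_self, sub_zero]
      linarith
  have ht6 : (ℓ₀ : ℝ) * ∫ p in Ici (0 : ℝ) ×ˢ (univ : Set ℕ),
      (f (x₀ + p.1) (ℓ₀ + p.2) - f x₀ ℓ₀) ∂ρm ≤ 0 := by
    apply mul_nonpos_of_nonneg_of_nonpos (Nat.cast_nonneg _)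
    apply setIntegral_nonpos hmeas
    intro p hp
    have hp1 : (0:ℝ) ≤ p.1 := hp.1
    have := hmax (x₀ + p.1) (by simp only [mem_Ici]; linarith) (ℓ₀ + p.2)
    linarith
  have ht7 : d * (ℓ₀ : ℝ) * (f x₀ (ℓ₀ - 1) - f x₀ ℓ₀) ≤ 0 := by
    apply mul_nonpos_of_nonneg_of_nonpos (mul_nonneg hd (Nat.cast_nonneg _))
    have := hmax x₀ hx₀ (ℓ₀ - 1)
    linarith
  unfold Lop
  linarith
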